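/- (Star-mesh transformations preserve end-to-end arrival functions.) Let A be a time-dependent network on a finite vertex set V, let s, d, c ∈ V with c ≠ s and c ≠ d, and define A' on the vertex set V \ {c} by A' u v = min(A u v, A c v ∘ A u c), the pointwise minimum. Then A' is again a time-dependent network (each A' u v is monotone and satisfies t ≤ A' u v t for all t), and the end-to-end arrival functions agree: A'_{(s,d)}(t) = A_{(s,d)}(t) for every t. (The pointwise minimum in the definition of A' simultaneously performs the parallel reductions.) -/

import Mathlib

open scoped ENNReal

/-- Arrival function of a walk: starting at `u` and then visiting the vertices of `l` in
order, departing at time `t`. -/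
def walkArr {V : Type*} (A : V → V → ℝ≥0∞ → ℝ≥0∞) : V → List V → ℝ≥0∞ → ℝ≥0∞
  | _, [], t => t
  | u, v :: l, t => walkArr A v l (A u v t)

/-- `l` (together with start vertex `s`) encodes a walk from `s` to `d`: the walk is the
nonempty vertex sequence `s :: l`, whose last vertex must be `d`. -/
def IsWalkTo {V : Type*} (s d : V) (l : List V) : Prop :=
  (s :: l).getLast (List.cons_ne_nil _ _) = d

/-- The end-to-end arrival function: infimum over all walks from `s` to `d`. -/
noncomputable def endToEnd {V : Type*} (A : V → V → ℝ≥0∞ → ℝ≥0∞) (s d : V) (t : ℝ≥0∞) :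
    ℝ≥0∞ :=
  ⨅ l : {l : List V // IsWalkTo s d l}, walkArr A s l.1 t

/-- The FIFO conditions on a time-dependent network: each edge arrival function is
monotone and arrival is not before departure. -/
def FIFO {V : Type*} (A : V → V → ℝ≥0∞ → ℝ≥0∞) : Prop :=
  ∀ u v : V, Monotone (A u v) ∧ ∀ t, t ≤ A u v t

/-!
Erasing `c` from a walk of `A` gives a walk of the reduced network that is never slower: a
detour `u → c → ⋯ → c → v` is matched by the edge `A' u v ≤ A c v ∘ A u c`, the loops at `c`
only delaying by FIFO. Conversely each edge of `A'` is a direct edge or a two-edge path through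
`c` of `A`, so the end-to-end arrival function of `A`, which satisfies the dynamic-programming
inequality `A_{(u,d)}(t) ≤ A_{(v,d)}(A u v t)`, is below every walk of `A'`.
-/

section

variable {V : Type*}

lemma walkArr_cons (A : V → V → ℝ≥0∞ → ℝ≥0∞) (u v : V) (l : List V) (t : ℝ≥0∞) :
    walkArr A u (v :: l) t = walkArr A v l (A u v t) := rfl

lemma walkArr_mono {A : V → V → ℝ≥0∞ → ℝ≥0∞} (hA : ∀ u v, Monotone (A u v)) :
    ∀ (l : List V) (u : V), Monotone (walkArr A u l)
  | [], _ => fun _ _ h => h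
  | v :: l, u => (walkArr_mono hA l v).comp (hA u v)

lemma isWalkTo_nil {s d : V} : IsWalkTo s d [] ↔ s = d := Iff.rfl

lemma isWalkTo_cons {s d v : V} {l : List V} : IsWalkTo s d (v :: l) ↔ IsWalkTo v d l := by
  rw [IsWalkTo, List.getLast_cons (List.cons_ne_nil v l), IsWalkTo]

lemma endToEnd_le_walkArr {A : V → V → ℝ≥0∞ → ℝ≥0∞} {s d : V} {l : List V}
    (hl : IsWalkTo s d l) (t : ℝ≥0∞) : endToEnd A s d t ≤ walkArr A s l t :=
  iInf_le (fun l : {l : List V // IsWalkTo s d l} => walkArr A s l.1 t) ⟨l, hl⟩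

lemma endToEnd_le_endToEnd_step (A : V → V → ℝ≥0∞ → ℝ≥0∞) (u v d : V) (t : ℝ≥0∞) :
    endToEnd A u d t ≤ endToEnd A v d (A u v t) :=
  le_iInf fun l => endToEnd_le_walkArr (isWalkTo_cons.mpr l.2) t

section StarMesh

variable (A : V → V → ℝ≥0∞ → ℝ≥0∞) (c : V)

def starMesh : {x : V // x ≠ c} → {x : V // x ≠ c} → ℝ≥0∞ → ℝ≥0∞ :=
  fun u v t => min (A u v t) (A c v (A u c t))

variable {A c}

lemma FIFO.starMesh (hA : FIFO A) : FIFO (starMesh A c) := fun u v =>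
  ⟨fun _ _ h => min_le_min ((hA u v).1 h) ((hA c v).1 ((hA u c).1 h)),
    fun t => le_min ((hA u v).2 t) (((hA u c).2 t).trans ((hA c v).2 _))⟩

lemma endToEnd_le_endToEnd_starMesh_step (u v : {x : V // x ≠ c}) (d : V) (t : ℝ≥0∞) :
    endToEnd A u d t ≤ endToEnd A v d (starMesh A c u v t) := by
  rcases min_choice (A u v t) (A c v (A u c t)) with h | h <;> rw [starMesh, h]
  · exact endToEnd_le_endToEnd_step A u v d t
  · exact (endToEnd_le_endToEnd_step A u c d t).trans (endToEnd_le_endToEnd_step A c v d _)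

lemma endToEnd_le_walkArr_starMesh {d : {x : V // x ≠ c}} :
    ∀ {l : List {x : V // x ≠ c}} {u : {x : V // x ≠ c}}, IsWalkTo u d l → ∀ t,
      endToEnd A u d t ≤ walkArr (starMesh A c) u l t
  | [], _, hl, t => endToEnd_le_walkArr (isWalkTo_nil.mpr (congrArg Subtype.val hl)) t
  | v :: _, u, hl, t => (endToEnd_le_endToEnd_starMesh_step u v d t).trans
      (endToEnd_le_walkArr_starMesh (isWalkTo_cons.mp hl) _)

variable [DecidableEq V]

variable (c) in
def eraseVertex : List V → List {x : V // x ≠ c}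
  | [] => []
  | v :: l => if h : v = c then eraseVertex l else ⟨v, h⟩ :: eraseVertex l

lemma isWalkTo_eraseVertex {d : V} (hd : d ≠ c) :
    ∀ {l : List V} {u : {x : V // x ≠ c}}, IsWalkTo u.1 d l →
      IsWalkTo u ⟨d, hd⟩ (eraseVertex c l)
  | [], _, hl => Subtype.ext hl
  | [v], u, hl => by
    obtain rfl : v = d := hl
    simpa [eraseVertex, hd] using isWalkTo_cons.mpr (isWalkTo_nil.mpr rfl)
  | v :: w :: l, u, hl => by
    have hwl : IsWalkTo w d l := isWalkTo_cons.mp (isWalkTo_cons.mp hl)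
    by_cases hv : v = c
    · simpa [eraseVertex, hv] using isWalkTo_eraseVertex hd (isWalkTo_cons.mpr hwl)
    · simpa [eraseVertex, hv] using
        isWalkTo_cons.mpr (isWalkTo_eraseVertex (u := ⟨v, hv⟩) hd (isWalkTo_cons.mpr hwl))

/-- The second conjunct handles a walk currently at `c`, having left the last vertex `u ≠ c`
at time `t`. -/
lemma walkArr_starMesh_eraseVertex_le (hA : FIFO A) (l : List V) :
    (∀ (u : {x : V // x ≠ c}) (t : ℝ≥0∞),
      walkArr (starMesh A c) u (eraseVertex c l) t ≤ walkArr A u l t) ∧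
    (∀ (u : {x : V // x ≠ c}) (t τ : ℝ≥0∞), A u c t ≤ τ →
      walkArr (starMesh A c) u (eraseVertex c l) t ≤ walkArr A c l τ) := by
  have hmono := walkArr_mono fun u v => (hA.starMesh (c := c) u v).1
  induction l with
  | nil => exact ⟨fun _ _ => le_rfl, fun u t _ h => ((hA u c).2 t).trans h⟩
  | cons v l ih =>
    by_cases hv : v = c
    · subst hv
      simp only [eraseVertex, dite_true, walkArr_cons]
      exact ⟨fun u t => ih.2 u t _ le_rfl, fun u t τ h => ih.2 u t _ (h.trans ((hA v v).2 τ))⟩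
    · simp only [eraseVertex, hv, dite_false, walkArr_cons]
      refine ⟨fun u t => ?_, fun u t τ h => ?_⟩
      · exact (hmono _ _ (min_le_left _ _)).trans (ih.1 ⟨v, hv⟩ _)
      · exact (hmono _ _ ((min_le_right _ _).trans ((hA c v).1 h))).trans (ih.1 ⟨v, hv⟩ _)

theorem endToEnd_starMesh (hA : FIFO A) {s d : V} (hs : s ≠ c) (hd : d ≠ c) (t : ℝ≥0∞) :
    endToEnd (starMesh A c) ⟨s, hs⟩ ⟨d, hd⟩ t = endToEnd A s d t := by
  refine le_antisymm (le_iInf fun l => ?_) (le_iInf fun l => endToEnd_le_walkArr_starMesh l.2 t)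
  calc endToEnd (starMesh A c) ⟨s, hs⟩ ⟨d, hd⟩ t
      ≤ walkArr (starMesh A c) ⟨s, hs⟩ (eraseVertex c l.1) t :=
        endToEnd_le_walkArr (isWalkTo_eraseVertex hd l.2) t
    _ ≤ walkArr A s l.1 t := (walkArr_starMesh_eraseVertex_le hA l.1).1 ⟨s, hs⟩ t

end StarMesh

end

theorem starMesh_preserves_endToEnd_general {V : Type*} [DecidableEq V]
    (A : V → V → ℝ≥0∞ → ℝ≥0∞) (hA : FIFO A) (s d c : V) (hcs : c ≠ s) (hcd : c ≠ d)
    (A' : {x : V // x ≠ c} → {x : V // x ≠ c} → ℝ≥0∞ → ℝ≥0∞)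
    (hA' : ∀ u v t, A' u v t = min (A u.1 v.1 t) (A c v.1 (A u.1 c t))) :
    FIFO A' ∧ ∀ t, endToEnd A' ⟨s, hcs.symm⟩ ⟨d, hcd.symm⟩ t = endToEnd A s d t := by
  obtain rfl : A' = starMesh A c := funext₃ hA'
  exact ⟨hA.starMesh, endToEnd_starMesh hA hcs.symm hcd.symm⟩

/-- Star-mesh transformations (with simultaneous parallel reductions) preserve end-to-end
arrival functions: eliminating a non-terminal vertex `c` by setting
`A' u v = min (A u v, A c v ∘ A u c)` yields a time-dependent network on `V \ {c}` with
the same `s`-to-`d` arrival function. -/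
theorem starMesh_preserves_endToEnd {V : Type*} [Fintype V] [DecidableEq V]
    (A : V → V → ℝ≥0∞ → ℝ≥0∞) (hA : FIFO A) (s d c : V) (hcs : c ≠ s) (hcd : c ≠ d)
    (A' : {x : V // x ≠ c} → {x : V // x ≠ c} → ℝ≥0∞ → ℝ≥0∞)
    (hA' : ∀ u v t, A' u v t = min (A u.1 v.1 t) (A c v.1 (A u.1 c t))) :
    FIFO A' ∧ ∀ t, endToEnd A' ⟨s, hcs.symm⟩ ⟨d, hcd.symm⟩ t = endToEnd A s d t :=
  starMesh_preserves_endToEnd_general A hA s d c hcs hcd A' hA'
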